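/- arXiv:1001.0323 — 6 statements merged into one kernel-verified Lean document; each statement's English description precedes it below -/
import Mathlib

section
/- Let A be an associative unital ring, x, z ∈ A, and define iterated commutators by [x^(0), z] = z and [x^(i+1), z] = x·[x^(i), z] − [x^(i), z]·x. Then for all elements x, z₁, …, zₙ ∈ A and every k ≥ 0, one has x^k · z₁z₂⋯zₙ = Σ over tuples (i₁,…,i_{n+1}) of non-negative integers with i₁+⋯+i_{n+1} = k of the multinomial coefficient k!/(i₁!⋯i_{n+1}!) times [x^(i₁), z₁]·…·[x^(iₙ), zₙ]·x^{i_{n+1}}. -/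
/-!
Left multiplication by `x` is `ad x + R_x`, where `R_x` is right multiplication, and these two
operators commute; the binomial theorem for them gives
`x ^ k * z = ∑ (k choose i) • (ad x)^i z * x ^ (k - i)`. Applying this to the first factor of
`z₁ ⋯ zₙ` and inducting on `n`, the binomial coefficients assemble into multinomial ones.
-/

/-- Iterated commutator: `adPow x 0 z = z`, `adPow x (i+1) z = x * adPow x i z - adPow x i z * x`. -/
def adPow {A : Type*} [Ring A] (x : A) : ℕ → A → A
  | 0, z => z
  | i + 1, z => x * adPow x i z - adPow x i z * x

open Finset

lemma Nat.multinomial_univ_fin_cons {n : ℕ} (i : ℕ) (g : Fin n → ℕ) :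
    Nat.multinomial univ (Fin.cons i g : Fin (n + 1) → ℕ) =
      (i + ∑ j, g j).choose i * Nat.multinomial univ g := by
  rw [Fin.univ_succ, Nat.multinomial_cons]
  simp [Nat.multinomial]

lemma Finset.Nat.sum_antidiagonalTuple_succ {M : Type*} [AddCommMonoid M] (n k : ℕ)
    (F : (Fin (n + 1) → ℕ) → M) :
    ∑ f ∈ antidiagonalTuple (n + 1) k, F f =
      ∑ p ∈ antidiagonal k, ∑ g ∈ antidiagonalTuple n p.2, F (Fin.cons p.1 g) := by
  rw [sum_sigma']
  refine sum_nbij' (fun f => ⟨(f 0, ∑ j, Fin.tail f j), Fin.tail f⟩) (fun q => Fin.cons q.1.1 q.2)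
    ?_ ?_ ?_ ?_ ?_ <;> simp +contextual [mem_antidiagonalTuple, Fin.sum_univ_succ, Fin.tail]

section Ring

variable {A : Type*} [Ring A]

lemma adPow_eq_pow_apply (x : A) (i : ℕ) (z : A) :
    adPow x i z = ((LinearMap.mulLeft ℤ x - LinearMap.mulRight ℤ x) ^ i) z := by
  induction i with
  | zero => rfl
  | succ i ih => rw [pow_succ', Module.End.mul_apply, ← ih]; rfl

lemma pow_mul_eq_sum_adPow_mul_pow (x z : A) (k : ℕ) :
    x ^ k * z = ∑ p ∈ antidiagonal k, k.choose p.1 • (adPow x p.1 z * x ^ p.2) := by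
  set L := LinearMap.mulLeft ℤ x
  set R := LinearMap.mulRight ℤ x
  have hcomm : Commute (L - R) R := (LinearMap.commute_mulLeft_right x x).sub_left (Commute.refl _)
  calc x ^ k * z = (((L - R) + R) ^ k) z := by rw [sub_add_cancel, LinearMap.pow_mulLeft]; rfl
    _ = _ := by
      rw [hcomm.add_pow', LinearMap.sum_apply]
      refine sum_congr rfl fun p _ => ?_
      rw [(hcomm.pow_pow p.1 p.2).eq]
      simp only [LinearMap.smul_apply, Module.End.mul_apply, L, R, LinearMap.pow_mulRight,
        LinearMap.mulRight_apply, adPow_eq_pow_apply]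

lemma pow_mul_prod_ofFn_eq_sum_multinomial_nsmul (x : A) (k n : ℕ) (z : Fin n → A) :
    x ^ k * (List.ofFn z).prod =
      ∑ f ∈ Nat.antidiagonalTuple (n + 1) k, Nat.multinomial univ f •
        ((List.ofFn fun j : Fin n => adPow x (f j.castSucc) (z j)).prod * x ^ f (Fin.last n)) := by
  induction n generalizing k with
  | zero => simp [Nat.antidiagonalTuple_one]
  | succ n ih =>
    rw [List.ofFn_succ, List.prod_cons, ← mul_assoc, pow_mul_eq_sum_adPow_mul_pow, sum_mul,
      Nat.sum_antidiagonalTuple_succ]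
    refine sum_congr rfl fun p hp => ?_
    rw [smul_mul_assoc, mul_assoc, ih, mul_sum, smul_sum]
    refine sum_congr rfl fun g hg => ?_
    rw [Nat.multinomial_univ_fin_cons, (Nat.mem_antidiagonalTuple.mp hg),
      mem_antidiagonal.mp hp]
    simp only [List.ofFn_succ, Fin.castSucc_zero, Fin.cons_zero, List.prod_cons,
      ← Fin.succ_castSucc, Fin.cons_succ, ← Fin.succ_last, mul_smul_comm, smul_smul, mul_assoc]

end Ring

/-- For all `x, z₁, …, zₙ` in an associative unital ring and `k ≥ 0`:
`x^k · z₁⋯zₙ = Σ_{i₁+⋯+i_{n+1}=k} (k!/(i₁!⋯i_{n+1}!)) [x^(i₁),z₁]⋯[x^(iₙ),zₙ] x^{i_{n+1}}`. -/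
theorem statement0 {A : Type*} [Ring A] (x : A) (k n : ℕ) (z : Fin n → A) :
    x ^ k * (List.ofFn z).prod =
      ∑ f ∈ Finset.Nat.antidiagonalTuple (n + 1) k,
        (Nat.multinomial Finset.univ f : A) *
          ((List.ofFn fun j : Fin n => adPow x (f j.castSucc) (z j)).prod *
            x ^ f (Fin.last n)) := by
  simp only [pow_mul_prod_ofFn_eq_sum_multinomial_nsmul, nsmul_eq_mul]
end

section
/- Let g be a Lie algebra over a field K of characteristic zero, M a module over the universal enveloping algebra U(g), x ∈ g, and v ∈ M with x·v = 0. Let y ∈ g with [x,[x,y]] = 0. Then for all n ≥ 0, xⁿ·yⁿ·v = n! · [x,y]ⁿ·v in M. -/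
/-!
If `a b = b a + c` and `c` commutes with `a`, then commuting `a^(m+1)` past `b` produces
`a^(m+1) b = b a^(m+1) + (m+1) c a^m`. Pushing `a^(k+n)` past `b^n` one factor at a
time and discarding every term that ends in `a^(j+1) v = 0` leaves
`a^(k+n) b^n v = (k+n)(k+n-1)⋯(k+1) c^n a^k v`; at `k = 0` this is `n! c^n v`. Take for
`a, b, c` the actions of `x, y, [x,y]` on `M`.
-/

section CommutatorPowers

variable {A : Type*} [Semiring A] {a b c : A}

theorem pow_succ_mul_eq_of_mul_eq_add (hab : a * b = b * a + c) (hac : Commute a c) (m : ℕ) :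
    a ^ (m + 1) * b = b * a ^ (m + 1) + (m + 1) • (c * a ^ m) := by
  induction m with
  | zero => simpa using hab
  | succ m ih =>
    calc a ^ (m + 2) * b = a * (a ^ (m + 1) * b) := by rw [pow_succ' a (m + 1), mul_assoc]
      _ = (a * b) * a ^ (m + 1) + (m + 1) • ((a * c) * a ^ m) := by
        rw [ih, mul_add, mul_smul_comm, ← mul_assoc, ← mul_assoc]
      _ = b * a ^ (m + 2) + (m + 2) • (c * a ^ (m + 1)) := by
        rw [hab, hac.eq, add_mul, mul_assoc, mul_assoc, ← pow_succ', ← pow_succ', add_assoc,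
          ← succ_nsmul']

variable {M : Type*} [AddCommMonoid M] [Module A M] {v : M}

theorem pow_add_smul_pow_smul_eq_of_smul_eq_zero (hab : a * b = b * a + c) (hac : Commute a c)
    (hv : a • v = 0) (k n : ℕ) :
    a ^ (k + n) • b ^ n • v = (k + n).descFactorial n • c ^ n • a ^ k • v := by
  induction n generalizing k with
  | zero => simp
  | succ n ih =>
    have hav : a ^ (k + 1) • v = 0 := by rw [pow_succ, mul_smul, hv, smul_zero]
    calc a ^ (k + (n + 1)) • b ^ (n + 1) • v
        = b • a ^ (k + 1 + n) • b ^ n • v + (k + n + 1) • c • a ^ (k + n) • b ^ n • v := by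
          rw [← add_assoc, pow_succ' b, mul_smul, ← mul_smul, pow_succ_mul_eq_of_mul_eq_add hab hac,
            add_smul, mul_smul, smul_assoc, mul_smul, add_right_comm k 1 n]
      _ = (k + (n + 1)).descFactorial (n + 1) • c ^ (n + 1) • a ^ k • v := by
        rw [ih, ih, hav, smul_zero, smul_zero, smul_zero, zero_add, smul_comm c, ← mul_smul c,
          ← pow_succ', smul_smul, ← add_assoc, Nat.succ_descFactorial_succ]

end CommutatorPowers

theorem LieModule.toEnd_mul_eq_add {R L M : Type*} [CommRing R] [LieRing L] [LieAlgebra R L]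
    [AddCommGroup M] [Module R M] [LieRingModule L M] [LieModule R L M] (x y : L) :
    toEnd R L M x * toEnd R L M y = toEnd R L M y * toEnd R L M x + toEnd R L M ⁅x, y⁆ := by
  ext m
  simp only [Module.End.mul_apply, LinearMap.add_apply, toEnd_apply_apply]
  exact (leibniz_lie x y m).trans (add_comm _ _)

theorem statement2_general {K : Type*} [Field K]
    {L : Type*} [LieRing L] [LieAlgebra K L]
    {M : Type*} [AddCommGroup M] [Module K M] [LieRingModule L M] [LieModule K L M]
    (x y : L) (v : M) (hxv : ⁅x, v⁆ = 0) (hxy : ⁅x, ⁅x, y⁆⁆ = 0) (n : ℕ) :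
    ((LieModule.toEnd K L M x) ^ n) (((LieModule.toEnd K L M y) ^ n) v) =
      (Nat.factorial n) • ((LieModule.toEnd K L M ⁅x, y⁆ ^ n) v) := by
  have hcomm : Commute (LieModule.toEnd K L M x) (LieModule.toEnd K L M ⁅x, y⁆) := by
    have h := LieModule.toEnd_mul_eq_add (R := K) (M := M) x ⁅x, y⁆
    rwa [hxy, map_zero, add_zero] at h
  simpa [Nat.descFactorial_self] using
    pow_add_smul_pow_smul_eq_of_smul_eq_zero (LieModule.toEnd_mul_eq_add x y) hcomm
      (v := v) hxv 0 n

/-- Let `g` be a Lie algebra over a field `K` of characteristic zero, `M` a `U(g)`-module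
(equivalently, a Lie module over `g`), `x ∈ g` and `v ∈ M` with `x·v = 0`, and `y ∈ g` with
`[x,[x,y]] = 0`. Then `xⁿ·yⁿ·v = n! · [x,y]ⁿ·v` for all `n ≥ 0`. -/
theorem statement2 {K : Type*} [Field K] [CharZero K]
    {L : Type*} [LieRing L] [LieAlgebra K L]
    {M : Type*} [AddCommGroup M] [Module K M] [LieRingModule L M] [LieModule K L M]
    (x y : L) (v : M) (hxv : ⁅x, v⁆ = 0) (hxy : ⁅x, ⁅x, y⁆⁆ = 0) (n : ℕ) :
    ((LieModule.toEnd K L M x) ^ n) (((LieModule.toEnd K L M y) ^ n) v) =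
      (Nat.factorial n) • ((LieModule.toEnd K L M ⁅x, y⁆ ^ n) v) :=
  statement2_general x y v hxv hxy n
end

section
/- Let g be a Lie algebra over a field K, M a U(g)-module, x ∈ g, and v ∈ M such that x acts locally finitely on v (i.e. the K-span of {xⁱ·v : i ≥ 0} is finite-dimensional). Then x acts locally finitely on every element of the U(g)-submodule U(g)·v generated by v. -/
/-!
If `ad x` is locally finite on `L` and `x` acts locally finitely on `a`, then it acts
locally finitely on every `⁅y, a⁆`: by the Leibniz rule
`⁅x, ⁅z, u⁆⁆ = ⁅⁅x, z⁆, u⁆ + ⁅z, ⁅x, u⁆⁆`, the span of the brackets of the `ad x`-orbit of `y`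
with the `x`-orbit of `a` is finite-dimensional and `x`-stable. Hence the vectors on which `x`
acts locally finitely form a Lie submodule, which contains `v` and therefore its Lie span.
For a finite-dimensional `L` every `ad x` is locally finite.
-/

namespace Module.End

variable {K V : Type*} [Field K] [AddCommGroup V] [Module K V] (f : Module.End K V)

def orbitSpan (w : V) : Submodule K V :=
  Submodule.span K (Set.range fun i : ℕ => (f ^ i) w)

lemma self_mem_orbitSpan (w : V) : w ∈ f.orbitSpan w :=
  Submodule.subset_span ⟨0, by simp⟩

lemma apply_mem_orbitSpan {w u : V} (hu : u ∈ f.orbitSpan w) : f u ∈ f.orbitSpan w := by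
  have hmap : (f.orbitSpan w).map f ≤ f.orbitSpan w := by
    rw [orbitSpan, Submodule.map_span, Submodule.span_le]
    rintro _ ⟨_, ⟨i, rfl⟩, rfl⟩
    exact Submodule.subset_span ⟨i + 1, by dsimp only; rw [pow_succ', Module.End.mul_apply]⟩
  exact hmap (Submodule.mem_map_of_mem hu)

lemma orbitSpan_le {w : V} {N : Submodule K V} (hw : w ∈ N) (hN : ∀ u ∈ N, f u ∈ N) :
    f.orbitSpan w ≤ N := by
  rw [orbitSpan, Submodule.span_le]
  rintro _ ⟨i, rfl⟩
  induction i with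
  | zero => simpa using hw
  | succ i ih =>
    change (f ^ (i + 1)) w ∈ N
    rw [pow_succ', Module.End.mul_apply]
    exact hN _ ih

lemma orbitSpan_add_le (a b : V) : f.orbitSpan (a + b) ≤ f.orbitSpan a ⊔ f.orbitSpan b := by
  refine f.orbitSpan_le (Submodule.add_mem_sup (f.self_mem_orbitSpan a)
    (f.self_mem_orbitSpan b)) fun u hu => ?_
  obtain ⟨p, hp, q, hq, rfl⟩ := Submodule.mem_sup.mp hu
  rw [map_add]
  exact Submodule.add_mem_sup (f.apply_mem_orbitSpan hp) (f.apply_mem_orbitSpan hq)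

lemma orbitSpan_smul_le (c : K) (a : V) : f.orbitSpan (c • a) ≤ f.orbitSpan a :=
  f.orbitSpan_le (Submodule.smul_mem _ c (f.self_mem_orbitSpan a))
    fun _ => f.apply_mem_orbitSpan

lemma orbitSpan_zero : f.orbitSpan 0 = ⊥ :=
  le_bot_iff.mp <| f.orbitSpan_le (Submodule.zero_mem ⊥) fun u hu => by
    rw [(Submodule.mem_bot K).mp hu, map_zero]
    exact Submodule.zero_mem ⊥

def locallyFiniteSubmodule : Submodule K V where
  carrier := {w | FiniteDimensional K (f.orbitSpan w)}
  add_mem' {a b} (_ : FiniteDimensional K (f.orbitSpan a))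
      (_ : FiniteDimensional K (f.orbitSpan b)) :=
    Submodule.finiteDimensional_of_le (f.orbitSpan_add_le a b)
  zero_mem' := by
    change FiniteDimensional K (f.orbitSpan 0)
    rw [f.orbitSpan_zero]
    infer_instance
  smul_mem' c a (_ : FiniteDimensional K (f.orbitSpan a)) :=
    Submodule.finiteDimensional_of_le (f.orbitSpan_smul_le c a)

lemma mem_locallyFiniteSubmodule_of_mem {w : V} {N : Submodule K V} [FiniteDimensional K N]
    (hw : w ∈ N) (hN : ∀ u ∈ N, f u ∈ N) : w ∈ f.locallyFiniteSubmodule :=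
  Submodule.finiteDimensional_of_le (f.orbitSpan_le hw hN)

end Module.End

namespace LieModule

variable {K L M : Type*} [Field K] [LieRing L] [LieAlgebra K L]
  [AddCommGroup M] [Module K M] [LieRingModule L M] [LieModule K L M]

lemma lie_mem_map₂_toEnd {x : L} {F : Submodule K L} {N : Submodule K M}
    (hF : ∀ z ∈ F, ⁅x, z⁆ ∈ F) (hN : ∀ u ∈ N, ⁅x, u⁆ ∈ N) :
    ∀ u ∈ Submodule.map₂ (toEnd K L M : L →ₗ[K] Module.End K M) F N,
      ⁅x, u⁆ ∈ Submodule.map₂ (toEnd K L M : L →ₗ[K] Module.End K M) F N := by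
  set P := Submodule.map₂ (toEnd K L M : L →ₗ[K] Module.End K M) F N
  have hmap : P.map (toEnd K L M x) ≤ P := by
    rw [Submodule.map_le_iff_le_comap, Submodule.map₂_le]
    intro z hz u hu
    change ⁅x, ⁅z, u⁆⁆ ∈ P
    rw [leibniz_lie]
    exact P.add_mem (Submodule.apply_mem_map₂ _ (hF z hz) hu)
      (Submodule.apply_mem_map₂ _ hz (hN u hu))
  exact fun u hu => hmap (Submodule.mem_map_of_mem hu)

variable (K L M) in
def locallyFiniteLieSubmodule [Module.Finite K L] (x : L) : LieSubmodule K L M where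
  __ := (toEnd K L M x).locallyFiniteSubmodule
  lie_mem {y a} (_ : FiniteDimensional K ((toEnd K L M x).orbitSpan a)) := by
    set P := Submodule.map₂ (toEnd K L M : L →ₗ[K] Module.End K M)
      ((LieAlgebra.ad K L x).orbitSpan y) ((toEnd K L M x).orbitSpan a)
    have : FiniteDimensional K P := Module.Finite.iff_fg.mpr <|
      (Module.Finite.iff_fg.mp inferInstance).map₂ _ (Module.Finite.iff_fg.mp inferInstance)
    have hyaP : ⁅y, a⁆ ∈ P := Submodule.apply_mem_map₂ _
      ((LieAlgebra.ad K L x).self_mem_orbitSpan y) ((toEnd K L M x).self_mem_orbitSpan a)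
    exact (toEnd K L M x).mem_locallyFiniteSubmodule_of_mem hyaP <|
      lie_mem_map₂_toEnd (fun _ => (LieAlgebra.ad K L x).apply_mem_orbitSpan)
        fun _ => (toEnd K L M x).apply_mem_orbitSpan

end LieModule

/-- Let `g` be a finite-dimensional Lie algebra over a field `K`, `M` a `U(g)`-module
(equivalently a Lie module over `g`), `x ∈ g` and `v ∈ M` such that `x` acts locally finitely
on `v` (the span of the `xⁱ·v` is finite-dimensional). Then `x` acts locally finitely on
every element of the submodule `U(g)·v` generated by `v`. -/
theorem statement3 {K : Type*} [Field K]
    {L : Type*} [LieRing L] [LieAlgebra K L] [Module.Finite K L]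
    {M : Type*} [AddCommGroup M] [Module K M] [LieRingModule L M] [LieModule K L M]
    (x : L) (v : M)
    (hfin : FiniteDimensional K
      (Submodule.span K (Set.range fun i : ℕ => ((LieModule.toEnd K L M x) ^ i) v))) :
    ∀ w ∈ LieSubmodule.lieSpan K L ({v} : Set M),
      FiniteDimensional K
        (Submodule.span K (Set.range fun i : ℕ => ((LieModule.toEnd K L M x) ^ i) w)) :=
  fun _ hw => LieSubmodule.lieSpan_le (N := LieModule.locallyFiniteLieSubmodule K L M x).mpr
    (Set.singleton_subset_iff.mpr hfin) hw
end

section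
/- Let Φ be a reduced root system, γ ∈ Φ⁺ a positive root with γ = α + β for a simple root α and a positive root β. If iβ − jα ∈ Φ⁺ for some positive integers i, j, then (iβ − jα) − γ = (i−1)β − (j+1)α is either a positive root or not an element of Φ ∪ {0}. -/
/-!
Since `α + β` is a root and the root system is reduced, `β` is not a multiple of `α`, so `β` has
a positive coefficient at some simple root `a ≠ α`. For `i ≥ 2` this coefficient of
`(i - 1) • β - (j + 1) • α` is still positive, so that vector is nonzero and, if it is a root,
it is a positive one. For `i = 1` the vector is `-(j + 1) • α`, which reducedness excludes from
the roots.
-/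

/-- A reduced root system in a real inner product space, together with a base of simple
roots with respect to which every root is a non-negative or non-positive integral
combination of simple roots. -/
structure RootSystemWithBase (V : Type*) [NormedAddCommGroup V] [InnerProductSpace ℝ V] where
  roots : Finset V
  simples : Finset V
  simples_subset : simples ⊆ roots
  simples_indep : LinearIndependent ℝ (fun a : {x // x ∈ simples} => (a : V))
  root_ne_zero : ∀ α ∈ roots, α ≠ 0
  span_eq_top : Submodule.span ℝ (roots : Set V) = ⊤
  reflect_mem : ∀ α ∈ roots, ∀ β ∈ roots,
    β - ((2 * inner ℝ β α / inner ℝ α α : ℝ)) • α ∈ roots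
  pairing_int : ∀ α ∈ roots, ∀ β ∈ roots, ∃ n : ℤ, (2 * inner ℝ β α / inner ℝ α α : ℝ) = (n : ℝ)
  reduced : ∀ α ∈ roots, ∀ t : ℝ, t • α ∈ roots → t = 1 ∨ t = -1
  pos_or_neg : ∀ β ∈ roots,
    (∃ c : {x // x ∈ simples} → ℕ, β = ∑ a : {x // x ∈ simples}, (c a : ℝ) • (a : V)) ∨
    (∃ c : {x // x ∈ simples} → ℕ, -β = ∑ a : {x // x ∈ simples}, (c a : ℝ) • (a : V))

/-- A positive root: a root which is a non-negative integral combination of the simple roots. -/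
def RootSystemWithBase.IsPos {V : Type*} [NormedAddCommGroup V] [InnerProductSpace ℝ V]
    (S : RootSystemWithBase V) (β : V) : Prop :=
  β ∈ S.roots ∧
    ∃ c : {x // x ∈ S.simples} → ℕ, β = ∑ a : {x // x ∈ S.simples}, (c a : ℝ) • (a : V)

open Module

namespace RootSystemWithBase

variable {V : Type*} [NormedAddCommGroup V] [InnerProductSpace ℝ V] (S : RootSystemWithBase V)

open Submodule in
theorem span_simples_eq_top : span ℝ (Set.range fun a : S.simples => (a : V)) = ⊤ := by
  refine eq_top_iff.mpr (S.span_eq_top ▸ span_le.mpr fun β hβ => ?_)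
  have hsum : ∀ c : S.simples → ℕ,
      ∑ a : S.simples, (c a : ℝ) • (a : V) ∈ span ℝ (Set.range fun a : S.simples => (a : V)) :=
    fun c => sum_mem fun a _ => smul_mem _ _ (subset_span ⟨a, rfl⟩)
  rcases S.pos_or_neg β hβ with ⟨c, hc⟩ | ⟨c, hc⟩
  · exact hc ▸ hsum c
  · exact neg_neg β ▸ neg_mem (hc ▸ hsum c)

noncomputable def basis : Basis S.simples ℝ V :=
  Basis.mk S.simples_indep S.span_simples_eq_top.ge

theorem basis_apply (a : S.simples) : S.basis a = a :=
  Basis.mk_apply _ _ a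

theorem coord_sum_smul (c : S.simples → ℝ) (a : S.simples) :
    S.basis.coord a (∑ b : S.simples, c b • (b : V)) = c a := by
  have h := S.basis.repr_sum_self c
  simp only [basis_apply] at h
  rw [Basis.coord_apply, h]

theorem coord_simple_of_ne {α : V} (hα : α ∈ S.simples) {a : S.simples} (ha : a ≠ ⟨α, hα⟩) :
    S.basis.coord a α = 0 :=
  Basis.mk_coord_apply_ne (v := fun a : S.simples => (a : V)) (i := a) (j := ⟨α, hα⟩) ha.symm

theorem coord_nonneg_of_isPos {β : V} (hβ : S.IsPos β) (a : S.simples) :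
    0 ≤ S.basis.coord a β := by
  obtain ⟨-, c, rfl⟩ := hβ
  rw [coord_sum_smul]
  exact Nat.cast_nonneg _

theorem isPos_of_coord_pos {β : V} (hβ : β ∈ S.roots) {a : S.simples}
    (hpos : 0 < S.basis.coord a β) : S.IsPos β := by
  refine ⟨hβ, (S.pos_or_neg β hβ).resolve_right ?_⟩
  rintro ⟨c, hc⟩
  have : S.basis.coord a (-β) = c a := by rw [hc, coord_sum_smul]
  rw [map_neg] at this
  linarith [(c a).cast_nonneg (α := ℝ)]

theorem exists_coord_pos_of_simple_add_mem_roots {α β : V} (hα : α ∈ S.simples)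
    (hβ : S.IsPos β) (hαβ : α + β ∈ S.roots) :
    ∃ a : S.simples, a ≠ ⟨α, hα⟩ ∧ 0 < S.basis.coord a β := by
  by_contra! h
  have hαr := S.simples_subset hα
  have hβα : β = S.basis.coord ⟨α, hα⟩ β • α := by
    conv_lhs => rw [← S.basis.sum_repr β]
    refine (Fintype.sum_eq_single ⟨α, hα⟩ fun a ha => ?_).trans ?_
    · rw [basis_apply, ← Basis.coord_apply, le_antisymm (h a ha) (S.coord_nonneg_of_isPos hβ a), zero_smul]
    · rw [basis_apply, ← Basis.coord_apply]
  rcases S.reduced α hαr _ (hβα ▸ hβ.1) with h1 | h1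
  · rw [hβα, h1, one_smul, ← two_smul ℝ] at hαβ
    rcases S.reduced α hαr 2 hαβ with h2 | h2 <;> norm_num at h2
  · rw [hβα, h1, neg_one_smul, add_neg_cancel] at hαβ
    exact S.root_ne_zero 0 hαβ rfl

end RootSystemWithBase

theorem statement4_general {V : Type*} [NormedAddCommGroup V] [InnerProductSpace ℝ V]
    (S : RootSystemWithBase V) (α β γ : V)
    (hα : α ∈ S.simples) (hβ : S.IsPos β) (hγdef : γ = α + β) (hγ : S.IsPos γ)
    (i j : ℕ) (hi : 0 < i) (hj : 0 < j) :
    S.IsPos (((i : ℝ) - 1) • β - ((j : ℝ) + 1) • α) ∨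
      ((((i : ℝ) - 1) • β - ((j : ℝ) + 1) • α) ∉ S.roots ∧
        (((i : ℝ) - 1) • β - ((j : ℝ) + 1) • α) ≠ 0) := by
  subst hγdef
  rcases (by omega : i = 1 ∨ 2 ≤ i) with rfl | hi2
  · have hvec : ((((1 : ℕ) : ℝ) - 1) • β - ((j : ℝ) + 1) • α) = (-((j : ℝ) + 1)) • α := by
      simp only [Nat.cast_one, sub_self, zero_smul, zero_sub, neg_smul]
    have hj' : (1 : ℝ) ≤ j := by exact_mod_cast hj
    right
    rw [hvec]
    refine ⟨fun hroot => ?_, smul_ne_zero (by linarith) (S.root_ne_zero α (S.simples_subset hα))⟩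
    rcases S.reduced α (S.simples_subset hα) _ hroot with h | h <;> linarith
  · obtain ⟨a, ha, hβa⟩ := S.exists_coord_pos_of_simple_add_mem_roots hα hβ hγ.1
    have hi2' : (2 : ℝ) ≤ i := by exact_mod_cast hi2
    have hδ : 0 < S.basis.coord a (((i : ℝ) - 1) • β - ((j : ℝ) + 1) • α) := by
      rw [map_sub, map_smul, map_smul, S.coord_simple_of_ne hα ha, smul_eq_mul, smul_zero,
        sub_zero]
      exact mul_pos (by linarith) hβa
    by_cases hroot : ((i : ℝ) - 1) • β - ((j : ℝ) + 1) • α ∈ S.roots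
    · exact Or.inl (S.isPos_of_coord_pos hroot hδ)
    · exact Or.inr ⟨hroot, fun h0 => by rw [h0, map_zero] at hδ; exact hδ.false⟩

/-- Let `Φ` be a reduced root system, `γ = α + β ∈ Φ⁺` with `α` simple and `β ∈ Φ⁺`.
If `iβ − jα ∈ Φ⁺` for some positive integers `i, j`, then
`(iβ − jα) − γ = (i−1)β − (j+1)α` is either a positive root or not in `Φ ∪ {0}`. -/
theorem statement4 {V : Type*} [NormedAddCommGroup V] [InnerProductSpace ℝ V]
    (S : RootSystemWithBase V) (α β γ : V)
    (hα : α ∈ S.simples) (hβ : S.IsPos β) (hγdef : γ = α + β) (hγ : S.IsPos γ)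
    (i j : ℕ) (hi : 0 < i) (hj : 0 < j)
    (hij : S.IsPos ((i : ℝ) • β - (j : ℝ) • α)) :
    S.IsPos (((i : ℝ) - 1) • β - ((j : ℝ) + 1) • α) ∨
      ((((i : ℝ) - 1) • β - ((j : ℝ) + 1) • α) ∉ S.roots ∧
        (((i : ℝ) - 1) • β - ((j : ℝ) + 1) • α) ≠ 0) :=
  statement4_general S α β γ hα hβ hγdef hγ i j hi hj
end

section
/- Let Φ be a root system none of whose irreducible components is of type G₂, with positive roots Φ⁺ = {β₁, …, β_r}, and let γ ∈ Φ⁺. If n, ν₁, …, ν_r are non-negative integers satisfying n·γ = ν₁β₁ + ⋯ + ν_rβ_r, then n ≤ ν₁ + ⋯ + ν_r. -/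
open Finset RealInnerProductSpace

section InnerProductSpace

variable {V : Type*} [NormedAddCommGroup V] [InnerProductSpace ℝ V]

theorem real_inner_le_inner_self_of_pairing_eq_int {b g : V} (hg : g ≠ 0)
    (hnorm : ‖b‖ ^ 2 ≤ 2 * ‖g‖ ^ 2) {m : ℤ} (hm : 2 * ⟪b, g⟫ / ⟪g, g⟫ = m) :
    ⟪b, g⟫ ≤ ⟪g, g⟫ := by
  have hgg : 0 < ⟪g, g⟫ := real_inner_self_pos.mpr hg
  have hpair : 2 * ⟪b, g⟫ = m * ⟪g, g⟫ := (div_eq_iff hgg.ne').mp hm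
  have hbb : ⟪b, b⟫ ≤ 2 * ⟪g, g⟫ := by
    simpa only [real_inner_self_eq_norm_sq] using hnorm
  have hcs : ⟪b, g⟫ * ⟪b, g⟫ ≤ ⟪b, b⟫ * ⟪g, g⟫ := real_inner_mul_inner_self_le b g
  have hm_sq : ((m : ℝ) * ⟪g, g⟫) ^ 2 ≤ 8 * ⟪g, g⟫ ^ 2 := by
    rw [← hpair]
    nlinarith
  have hm_le : m ≤ 2 := by
    have : (m : ℝ) ^ 2 ≤ 8 :=
      le_of_mul_le_mul_right (by nlinarith) (pow_pos hgg 2)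
    have : m ^ 2 ≤ 8 := by exact_mod_cast this
    nlinarith
  have hm_le' : (m : ℝ) ≤ 2 := by exact_mod_cast hm_le
  nlinarith

theorem nat_le_sum_of_smul_eq_sum_smul {ι : Type*} [Fintype ι] {γ : V} (hγ : γ ≠ 0)
    {β : ι → V} (hβ : ∀ i, ⟪β i, γ⟫ ≤ ⟪γ, γ⟫) {n : ℕ} {ν : ι → ℕ}
    (hsum : (n : ℝ) • γ = ∑ i, (ν i : ℝ) • β i) :
    n ≤ ∑ i, ν i := by
  have hγγ : 0 < ⟪γ, γ⟫ := real_inner_self_pos.mpr hγ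
  have hpaired : (n : ℝ) * ⟪γ, γ⟫ = ∑ i, (ν i : ℝ) * ⟪β i, γ⟫ := by
    simpa only [sum_inner, real_inner_smul_left] using congrArg (⟪·, γ⟫) hsum
  have hle : (n : ℝ) * ⟪γ, γ⟫ ≤ (∑ i, ν i : ℕ) * ⟪γ, γ⟫ := by
    rw [hpaired, Nat.cast_sum, sum_mul]
    exact sum_le_sum fun i _ => mul_le_mul_of_nonneg_left (hβ i) (Nat.cast_nonneg _)
  exact_mod_cast le_of_mul_le_mul_right hle hγγ

end InnerProductSpace

namespace RootSystemWithBase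

variable {V : Type*} [NormedAddCommGroup V] [InnerProductSpace ℝ V] (S : RootSystemWithBase V)

theorem inner_le_inner_self
    (hratio : ∀ β ∈ S.roots, ∀ γ ∈ S.roots,
      ‖β‖ ^ 2 / ‖γ‖ ^ 2 = 1 / 2 ∨ ‖β‖ ^ 2 / ‖γ‖ ^ 2 = 1 ∨ ‖β‖ ^ 2 / ‖γ‖ ^ 2 = 2)
    {b g : V} (hb : b ∈ S.roots) (hg : g ∈ S.roots) :
    ⟪b, g⟫ ≤ ⟪g, g⟫ := by
  have hg0 : g ≠ 0 := S.root_ne_zero g hg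
  have hgg : 0 < ‖g‖ ^ 2 := by positivity
  have hnorm : ‖b‖ ^ 2 ≤ 2 * ‖g‖ ^ 2 := by
    rcases hratio b hb g hg with h | h | h <;> rw [div_eq_iff hgg.ne'] at h <;> linarith
  obtain ⟨m, hm⟩ := S.pairing_int g hg b hb
  exact real_inner_le_inner_self_of_pairing_eq_int hg0 hnorm hm

end RootSystemWithBase

theorem statement6_general {V : Type*} [NormedAddCommGroup V] [InnerProductSpace ℝ V]
    (S : RootSystemWithBase V)
    (hratio : ∀ β ∈ S.roots, ∀ γ ∈ S.roots,
      ‖β‖ ^ 2 / ‖γ‖ ^ 2 = 1 / 2 ∨ ‖β‖ ^ 2 / ‖γ‖ ^ 2 = 1 ∨ ‖β‖ ^ 2 / ‖γ‖ ^ 2 = 2)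
    (r : ℕ) (β : Fin r → V) (hβpos : ∀ i, S.IsPos (β i))
    (γ : V) (hγ : S.IsPos γ) (n : ℕ) (ν : Fin r → ℕ)
    (hsum : (n : ℝ) • γ = ∑ i, (ν i : ℝ) • β i) :
    n ≤ ∑ i, ν i :=
  nat_le_sum_of_smul_eq_sum_smul (S.root_ne_zero γ hγ.1)
    (fun i => S.inner_le_inner_self hratio (hβpos i).1 hγ.1) hsum

/-- Let `Φ` be a root system none of whose irreducible components is of type `G₂`
(equivalently, the squared length ratio of any two roots lies in `{1/2, 1, 2}`), with
positive roots `Φ⁺ = {β₁, …, β_r}` and `γ ∈ Φ⁺`. If `n·γ = ν₁β₁ + ⋯ + ν_rβ_r` with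
non-negative integers `n, νᵢ`, then `n ≤ ν₁ + ⋯ + ν_r`. -/
theorem statement6 {V : Type*} [NormedAddCommGroup V] [InnerProductSpace ℝ V]
    (S : RootSystemWithBase V)
    (hratio : ∀ β ∈ S.roots, ∀ γ ∈ S.roots,
      ‖β‖ ^ 2 / ‖γ‖ ^ 2 = 1 / 2 ∨ ‖β‖ ^ 2 / ‖γ‖ ^ 2 = 1 ∨ ‖β‖ ^ 2 / ‖γ‖ ^ 2 = 2)
    (r : ℕ) (β : Fin r → V) (hβpos : ∀ i, S.IsPos (β i))
    (hβall : ∀ δ : V, S.IsPos δ → ∃ i, β i = δ)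
    (γ : V) (hγ : S.IsPos γ) (n : ℕ) (ν : Fin r → ℕ)
    (hsum : (n : ℝ) • γ = ∑ i, (ν i : ℝ) • β i) :
    n ≤ ∑ i, ν i :=
  statement6_general S hratio r β hβpos γ hγ n ν hsum
end

section
/- Let B be a finite non-empty subset of a real vector space V and β⁺ ∈ B an element such that ℝ_{>0}β⁺ ∩ Σ_{β∈B, β≠β⁺} ℝ_{≥0}β = ∅, and suppose additionally that B is contained in an open half-space (e.g. B consists of positive roots, all having positive height). Then for every positive integer n, if nβ⁺ = γ₁ + ⋯ + γ_m with (not necessarily distinct) elements γᵢ ∈ B, then m = n and γ₁ = ⋯ = γ_m = β⁺. -/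
/-- Let `B` be a finite non-empty subset of a real vector space `V`, contained in an open
half-space `{v | f v > 0}` for some linear functional `f` (as is the case for a set of
positive roots, via the height functional), and `β⁺ ∈ B` extremal:
`ℝ_{>0}β⁺ ∩ Σ_{β∈B, β≠β⁺} ℝ_{≥0}β = ∅`. Then for every positive integer `n`, if
`nβ⁺ = γ₁ + ⋯ + γ_m` with (not necessarily distinct) `γᵢ ∈ B`, then `m = n` and all
`γᵢ = β⁺`. -/
theorem statement14 {V : Type*} [AddCommGroup V] [Module ℝ V] [DecidableEq V]
    (B : Finset V) (hBne : B.Nonempty)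
    (f : V →ₗ[ℝ] ℝ) (hf : ∀ b ∈ B, 0 < f b)
    (βp : V) (hβp : βp ∈ B)
    (hext : ∀ t : ℝ, 0 < t → ∀ c : V → ℝ, (∀ b ∈ B.erase βp, 0 ≤ c b) →
      t • βp ≠ ∑ b ∈ B.erase βp, c b • b)
    (n m : ℕ) (hn : 0 < n) (γ : Fin m → V) (hγ : ∀ i, γ i ∈ B)
    (hsum : (n : ℝ) • βp = ∑ i, γ i) :
    m = n ∧ ∀ i, γ i = βp := by
  classical
  set S : Finset (Fin m) := Finset.univ.filter (fun i => γ i = βp) with hS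
  have hsplit : ∑ i, γ i = (S.card : ℝ) • βp + ∑ i ∈ Sᶜ, γ i := by
    rw [← Finset.sum_add_sum_compl S]
    congr 1
    rw [Finset.sum_congr rfl (fun i hi => (Finset.mem_filter.mp hi).2),
      Finset.sum_const]
    exact (Nat.cast_smul_eq_nsmul ℝ _ _).symm
  by_cases hc : Sᶜ = ∅
  · have hall : ∀ i, γ i = βp := by
      intro i
      have hi : i ∈ S := by
        by_contra h
        exact (Finset.eq_empty_iff_forall_notMem.mp hc i) (Finset.mem_compl.mpr h)
      exact (Finset.mem_filter.mp hi).2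
    have hmsum : ∑ i, γ i = (m : ℝ) • βp := by
      rw [Finset.sum_congr rfl fun i _ => hall i, Finset.sum_const,
        Finset.card_univ, Fintype.card_fin]
      exact (Nat.cast_smul_eq_nsmul ℝ _ _).symm
    have hfe : (n : ℝ) * f βp = (m : ℝ) * f βp := by
      have := congrArg f (hsum.trans hmsum)
      simpa [map_smul] using this
    have : (m : ℝ) = (n : ℝ) :=
      (mul_right_cancel₀ (ne_of_gt (hf βp hβp)) hfe).symm
    exact ⟨Nat.cast_injective this, hall⟩
  · exfalso
    have hrem : ((n : ℝ) - S.card) • βp = ∑ i ∈ Sᶜ, γ i := by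
      rw [sub_smul]
      rw [hsplit] at hsum
      rw [hsum]; abel
    have hne : (Sᶜ : Finset (Fin m)).Nonempty := Finset.nonempty_iff_ne_empty.mpr hc
    have hpos : 0 < (n : ℝ) - S.card := by
      have hfr := congrArg f hrem
      rw [map_smul, map_sum, smul_eq_mul] at hfr
      have hsp : 0 < ∑ i ∈ Sᶜ, f (γ i) :=
        Finset.sum_pos (fun i _ => hf _ (hγ i)) hne
      have hfb := hf βp hβp
      nlinarith [hfr, hsp, hfb]
    refine hext _ hpos (fun b => ((Sᶜ.filter (fun i => γ i = b)).card : ℝ))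
      (fun b _ => by positivity) ?_
    rw [hrem]
    have himg : (Sᶜ.image γ) ⊆ B.erase βp := by
      intro b hb
      obtain ⟨i, hi, rfl⟩ := Finset.mem_image.mp hb
      refine Finset.mem_erase.mpr ⟨?_, hγ i⟩
      have : i ∉ S := Finset.mem_compl.mp hi
      simpa [hS] using this
    have hcomp : ∑ i ∈ Sᶜ, γ i
        = ∑ b ∈ Sᶜ.image γ, ((Sᶜ.filter (fun i => γ i = b)).card : ℝ) • b := by
      rw [show (∑ i ∈ Sᶜ, γ i) = ∑ i ∈ Sᶜ, id (γ i) from rfl, Finset.sum_comp]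
      exact Finset.sum_congr rfl fun b _ => (Nat.cast_smul_eq_nsmul ℝ _ _).symm
    rw [hcomp]
    refine Finset.sum_subset himg ?_
    intro b _ hb
    have : Sᶜ.filter (fun i => γ i = b) = ∅ := by
      refine Finset.filter_eq_empty_iff.mpr fun i hi hgi => ?_
      exact hb (Finset.mem_image.mpr ⟨i, hi, hgi⟩)
    simp [this]
end
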